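/- With the reduction of state k, the first hitting times of state 0 for the original and reduced embedded chains are linked by U_0 = _kV_{_kU_0}, i.e., the first time n ≥ 1 with J_n = 0 equals the time of the (_kU_0)-th visit to the reduced space X \ {k}, where _kU_0 = min{n ≥ 1 : _kJ_n = 0}. -/
import Mathlib


open MeasureTheory

/-- Successive times of visits of the path `ω` to the reduced state space `X \ {k}`. -/
noncomputable def redV {X : Type*} (k : X) (ω : ℕ → X) : ℕ → ℕ
  | 0 => 0
  | n + 1 => sInf {r | redV k ω n < r ∧ ω r ≠ k}

/-- For a Markov chain `J_n` that a.s. hits state `0` at some time `n ≥ 1`,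
the first hitting time `U₀ = min{n ≥ 1 : J_n = 0}` equals the time `ₖV_{ₖU₀}` of the
`ₖU₀`-th visit to the reduced space `X \ {k}`, where
`ₖU₀ = min{n ≥ 1 : ₖJ_n = 0}` is the first hitting time of `0` by the reduced chain
`ₖJ_n = J_{ₖV_n}` (for `k ≠ 0`). -/
theorem hitting_time_eq_reduced_visit_time {m : ℕ}
    (p : Fin (m + 1) → Fin (m + 1) → ℝ)
    (hp : ∀ i j, 0 ≤ p i j) (hrow : ∀ i, ∑ j, p i j = 1)
    (μ : Fin (m + 1) → Measure (ℕ → Fin (m + 1)))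
    (hprob : ∀ i, IsProbabilityMeasure (μ i))
    (hcyl : ∀ (i : Fin (m + 1)) (n : ℕ) (f : ℕ → Fin (m + 1)),
      (μ i {ω | ∀ k ≤ n, ω k = f k}).toReal =
        if f 0 = i then ∏ k ∈ Finset.range n, p (f k) (f (k + 1)) else 0)
    (k : Fin (m + 1)) (hk : k ≠ 0)
    (hhit : ∀ i, μ i {ω | ∃ n, 1 ≤ n ∧ ω n = 0} = 1) :
    ∀ i, μ i {ω | sInf {n | 1 ≤ n ∧ ω n = 0} =
      redV k ω (sInf {n | 1 ≤ n ∧ ω (redV k ω n) = 0})} = 1 := by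
  intro i
  have hdet : ∀ ω : ℕ → Fin (m + 1), (∃ n, 1 ≤ n ∧ ω n = 0) →
      sInf {n | 1 ≤ n ∧ ω n = 0} =
        redV k ω (sInf {n | 1 ≤ n ∧ ω (redV k ω n) = 0}) := by
    intro ω hne
    set U := sInf {n | 1 ≤ n ∧ ω n = 0} with hUdef
    have hU : 1 ≤ U ∧ ω U = 0 := Nat.sInf_mem hne
    have hUmin : ∀ n, 1 ≤ n → ω n = 0 → U ≤ n := fun n h1 h2 =>
      Nat.sInf_le ⟨h1, h2⟩
    -- claim A
    have hA : ∀ n, redV k ω n < U →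
        redV k ω n < redV k ω (n + 1) ∧ redV k ω (n + 1) ≤ U ∧
          ω (redV k ω (n + 1)) ≠ k := by
      intro n hn
      have hUS : U ∈ {r | redV k ω n < r ∧ ω r ≠ k} := by
        refine ⟨hn, ?_⟩
        rw [hU.2]; exact fun h => hk h.symm
      have hmem : redV k ω (n + 1) ∈ {r | redV k ω n < r ∧ ω r ≠ k} := by
        rw [show redV k ω (n + 1) = sInf {r | redV k ω n < r ∧ ω r ≠ k} from rfl]
        exact Nat.sInf_mem ⟨U, hUS⟩
      exact ⟨hmem.1, Nat.sInf_le hUS, hmem.2⟩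
    -- T nonempty
    have hTne : ∃ j, U ≤ redV k ω j := by
      by_contra h
      push_neg at h
      have hle : ∀ j, j ≤ redV k ω j := by
        intro j
        induction j with
        | zero => exact Nat.zero_le _
        | succ n ih =>
          have := (hA n (h n)).1
          omega
      exact absurd (hle U) (by have := h U; omega)
    set J := sInf {j | U ≤ redV k ω j} with hJdef
    have hJmem : U ≤ redV k ω J := Nat.sInf_mem hTne
    have hJlt : ∀ n < J, redV k ω n < U := by
      intro n hn
      by_contra h
      exact absurd (Nat.sInf_le (show n ∈ {j | U ≤ redV k ω j} from not_lt.mp h))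
        (Nat.not_le.mpr hn)
    have hJ1 : 1 ≤ J := by
      by_contra h
      have hJ0 : J = 0 := by omega
      have : redV k ω 0 = 0 := rfl
      rw [hJ0, this] at hJmem
      omega
    have hJU : redV k ω J = U := by
      have hprev : redV k ω (J - 1) < U := hJlt _ (by omega)
      have := (hA (J - 1) hprev).2.1
      rw [show J - 1 + 1 = J by omega] at this
      omega
    -- now sInf {n | 1 ≤ n ∧ ω (redV k ω n) = 0} = J
    have hJin : J ∈ {n | 1 ≤ n ∧ ω (redV k ω n) = 0} := ⟨hJ1, by rw [hJU]; exact hU.2⟩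
    have hlow : ∀ n, 1 ≤ n → n < J → ω (redV k ω n) ≠ 0 := by
      intro n h1 hn h0
      have hlt : redV k ω n < U := hJlt n hn
      have hpos : 1 ≤ redV k ω n := by
        have hprev : redV k ω (n - 1) < U := hJlt _ (by omega)
        have := (hA (n - 1) hprev).1
        rw [show n - 1 + 1 = n by omega] at this
        omega
      exact absurd (hUmin _ hpos h0) (by omega)
    have hsinf : sInf {n | 1 ≤ n ∧ ω (redV k ω n) = 0} = J := by
      have h1 : sInf {n | 1 ≤ n ∧ ω (redV k ω n) = 0} ≤ J := Nat.sInf_le hJin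
      have h2 := Nat.sInf_mem (⟨J, hJin⟩ : {n | 1 ≤ n ∧ ω (redV k ω n) = 0}.Nonempty)
      rcases lt_or_eq_of_le h1 with h | h
      · exact absurd h2.2 (hlow _ h2.1 h)
      · exact h
    rw [hsinf, hJU]
  have hsub : {ω : ℕ → Fin (m + 1) | ∃ n, 1 ≤ n ∧ ω n = 0} ⊆
      {ω | sInf {n | 1 ≤ n ∧ ω n = 0} =
        redV k ω (sInf {n | 1 ≤ n ∧ ω (redV k ω n) = 0})} :=
    fun ω hω => hdet ω hω
  have := hprob i
  refine le_antisymm prob_le_one ?_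
  calc (1 : ENNReal) = μ i {ω | ∃ n, 1 ≤ n ∧ ω n = 0} := (hhit i).symm
    _ ≤ _ := measure_mono hsub
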